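/- arXiv:1808.06242 — 3 statements merged into one kernel-verified Lean document; each statement's English description precedes it below -/
import Mathlib

section
/- If the categories A(Δ) and A(Δ') are isomorphic (as abstract categories), then the types Δ and Δ' are equivalent. -/
universe u

/-- An algebra of type `Δ = (K i)_{i ∈ I}`: a carrier set with, for each `i`,
a `K i`-ary operation. -/
structure Alg {I : Type u} (K : I → Type u) : Type (u + 1) where
  carrier : Type u
  op : ∀ i, (K i → carrier) → carrier

/-- A homomorphism of algebras of type `K`. -/
@[ext]
structure HomOfAlg {I : Type u} (K : I → Type u) (A B : Alg K) where
  toFun : A.carrier → B.carrier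
  map_op : ∀ i (α : K i → A.carrier), toFun (A.op i α) = B.op i (toFun ∘ α)

/-- The category `A(Δ)` of all algebras of type `K` and homomorphisms. -/
instance algCategory {I : Type u} (K : I → Type u) : CategoryTheory.Category (Alg K) where
  Hom A B := HomOfAlg K A B
  id A := ⟨id, fun _ _ => rfl⟩
  comp f g := ⟨g.toFun ∘ f.toFun, fun i α => by
    show g.toFun (f.toFun _) = _; rw [f.map_op, g.map_op]; rfl⟩
  id_comp f := HomOfAlg.ext rfl
  comp_id f := HomOfAlg.ext rfl
  assoc f g h := HomOfAlg.ext rfl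

/-- The underlying set functor `s : A(Δ) → Set`. -/
def forgetAlg {I : Type u} (K : I → Type u) :
    CategoryTheory.Functor (Alg K) (Type u) where
  obj A := A.carrier
  map f := TypeCat.ofHom f.toFun
  map_id _ := rfl
  map_comp _ _ := rfl

/-- Terms of type `K` over variables `X` (the absolutely free algebra). -/
inductive AlgTerm {I : Type u} (K : I → Type u) (X : Type u) : Type u
  | var : X → AlgTerm K X
  | op : ∀ i, (K i → AlgTerm K X) → AlgTerm K X

/-- The term algebra (absolutely free algebra) on `X`. -/
def TermAlg {I : Type u} (K : I → Type u) (X : Type u) : Alg K :=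
  ⟨AlgTerm K X, AlgTerm.op⟩

/-- Homomorphic extension of an assignment `α : X → A` to the term algebra. -/
def extendHom {I : Type u} {K : I → Type u} {X : Type u} {A : Alg K}
    (α : X → A.carrier) : AlgTerm K X → A.carrier
  | .var x => α x
  | .op i β => A.op i (fun k => extendHom α (β k))

/-- The support of a `K`-ary operation `f : F^K → F`. -/
def supp {F K : Type u} (f : (K → F) → F) : Set (Set K) :=
  {A | ∀ α β : K → F, (∀ k ∈ A, α k = β k) → f α = f β}

/-- Equivalence of types: a bijection of index sets preserving arity cardinalities. -/
def EquivType {I J : Type u} (K : I → Type u) (L : J → Type u) : Prop :=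
  ∃ φ : I ≃ J, ∀ i, Nonempty (K i ≃ L (φ i))

/-- The essential rank of an operation: least cardinality of a support set. -/
noncomputable def essRank {F K : Type u} (f : (K → F) → F) : Cardinal.{u} :=
  sInf {c : Cardinal.{u} | ∃ A ∈ supp f, Cardinal.mk A = c}

/-- `P` is free on the family `b : X → P`. -/
def IsFreeOn {I : Type u} {K : I → Type u} (P : Alg K) {X : Type u}
    (b : X → P.carrier) : Prop :=
  ∀ (A : Alg K) (α : X → A.carrier), ∃! h : HomOfAlg K P A, h.toFun ∘ b = α

/-- `P` is a free algebra (on some basis). -/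
def IsFree {I : Type u} {K : I → Type u} (P : Alg K) : Prop :=
  ∃ (X : Type u) (b : X → P.carrier), IsFreeOn P b

/-- `P` is free of rank 1: free on a single generator. -/
def IsFreeRank1 {I : Type u} {K : I → Type u} (P : Alg K) : Prop :=
  ∃ p : P.carrier, ∀ (A : Alg K) (a : A.carrier),
    ∃! h : HomOfAlg K P A, h.toFun p = a

open CategoryTheory

/-!
The free algebra `freeAlg₁ K` on one generator is recognised inside the abstract category `A(K)`:
it is projective for extremal epimorphisms (which are the surjections), it is a separator, and
no separating retract of it is proper. Conversely, an object `P` with these properties is a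
retract of the term algebra on its own carrier; being a separator, the retract contains a
variable `y`, and collapsing all variables to one generator exhibits `freeAlg₁ K` as a separating
retract of `P`, so `P ≅ freeAlg₁ K`.

Hence an isomorphism of categories `E : A(K) ≅ A(L)` sends `freeAlg₁ K` to `freeAlg₁ L` and, as
it preserves coproducts, `TermAlg K V` to `TermAlg L V`. Reading terms as morphisms out of
`freeAlg₁`, this yields bijections `AlgTerm K V ≃ AlgTerm L V` that fix variables and commute
with substitution. The terms `op i (var ∘ α)` can be described by substitution alone, so the
basic term `op i var` is sent to some `op (φ i) (var ∘ α)`; comparing with the inverse bijection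
shows that `φ` is a bijection and that the arities `K i` and `L (φ i)` surject onto each other.
-/

open CategoryTheory Limits

namespace AlgTerm

variable {I : Type u} {K : I → Type u} {X Y : Type u}

def subst (σ : X → AlgTerm K Y) (t : AlgTerm K X) : AlgTerm K Y :=
  extendHom (A := TermAlg K Y) σ t

@[simp] lemma subst_var (σ : X → AlgTerm K Y) (x : X) : (var x : AlgTerm K X).subst σ = σ x :=
  rfl

lemma eq_of_op_eq_op {i : I} {β γ : K i → AlgTerm K X} (h : op i β = op i γ) : β = γ :=
  eq_of_heq (op.inj h).2

lemma extendHom_eq_of_subst_eq_self {σ : X → AlgTerm K X} (hσ : ∀ x, σ x ≠ var x)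
    {t : AlgTerm K X} (ht : t.subst σ = t) {A : Alg K} (α β : X → A.carrier) :
    extendHom α t = extendHom β t := by
  induction t with
  | var x => exact absurd ht (hσ x)
  | op i γ ih =>
    have hγ := eq_of_op_eq_op ht
    exact congrArg (A.op i) (funext fun k => ih k (congrFun hγ k))

end AlgTerm

namespace TermAlg

open AlgTerm

variable {I : Type u} {K : I → Type u} {X : Type u} {A : Alg K}

def lift (α : X → A.carrier) : TermAlg K X ⟶ A :=
  ⟨extendHom α, fun _ _ => rfl⟩

lemma toFun_eq_extendHom (h : TermAlg K X ⟶ A) (t : AlgTerm K X) :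
    h.toFun t = extendHom (fun x => h.toFun (var x)) t := by
  induction t with
  | var x => rfl
  | op i β ih => exact (h.map_op i β).trans (congrArg (A.op i) (funext ih))

lemma hom_ext {h₁ h₂ : TermAlg K X ⟶ A}
    (h : ∀ x, h₁.toFun (var x) = h₂.toFun (var x)) : h₁ = h₂ :=
  HomOfAlg.ext <| funext fun t => by
    rw [toFun_eq_extendHom h₁ t, toFun_eq_extendHom h₂ t, funext h]

end TermAlg

abbrev freeAlg₁ {I : Type u} (K : I → Type u) : Alg K := TermAlg K PUnit

namespace freeAlg₁

open AlgTerm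

variable {I : Type u} {K : I → Type u} {A : Alg K}

abbrev gen : (freeAlg₁ K).carrier := var ⟨⟩

lemma hom_ext {h₁ h₂ : freeAlg₁ K ⟶ A}
    (h : h₁.toFun gen = h₂.toFun gen) : h₁ = h₂ :=
  TermAlg.hom_ext fun _ => h

def homOf (A : Alg K) (a : A.carrier) : freeAlg₁ K ⟶ A :=
  TermAlg.lift fun _ => a

def homEquiv (A : Alg K) : (freeAlg₁ K ⟶ A) ≃ A.carrier where
  toFun h := h.toFun gen
  invFun := homOf A
  left_inv _ := hom_ext rfl
  right_inv _ := rfl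

end freeAlg₁

namespace Alg

variable {I : Type u} {K : I → Type u} {A B : Alg K}

lemma injective_of_mono (m : A ⟶ B) [Mono m] : Function.Injective m.toFun := fun _ _ h =>
  (freeAlg₁.homEquiv A).symm.injective <|
    (cancel_mono m).mp (freeAlg₁.hom_ext (A := B) h)

lemma mono_of_injective (m : A ⟶ B) (hm : Function.Injective m.toFun) : Mono m :=
  ⟨fun _ _ h => HomOfAlg.ext <| funext fun z => hm (congrFun (congrArg HomOfAlg.toFun h) z)⟩

lemma epi_of_surjective (e : A ⟶ B) (he : Function.Surjective e.toFun) : Epi e :=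
  ⟨fun _ _ h => HomOfAlg.ext <| he.injective_comp_right (congrArg HomOfAlg.toFun h)⟩

lemma bijective_of_isIso (f : A ⟶ B) [IsIso f] : Function.Bijective f.toFun := by
  refine Function.bijective_iff_has_inverse.mpr ⟨HomOfAlg.toFun (inv f), ?_, ?_⟩
  · exact congrFun (congrArg HomOfAlg.toFun (IsIso.hom_inv_id f))
  · exact congrFun (congrArg HomOfAlg.toFun (IsIso.inv_hom_id f))

lemma isIso_of_bijective (f : A ⟶ B) (hf : Function.Bijective f.toFun) : IsIso f := by
  let e := Equiv.ofBijective f.toFun hf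
  let g : B ⟶ A := ⟨e.symm, fun i β => hf.1 <| by
    change e (e.symm _) = f.toFun (A.op i _)
    rw [e.apply_symm_apply, f.map_op]
    exact congrArg (B.op i) (funext fun k => (e.apply_symm_apply (β k)).symm)⟩
  exact ⟨g, HomOfAlg.ext (funext e.symm_apply_apply), HomOfAlg.ext (funext e.apply_symm_apply)⟩

def range (f : A ⟶ B) : Alg K where
  carrier := Set.range f.toFun
  op i β := ⟨B.op i fun k => (β k).1,
    ⟨A.op i fun k => (β k).2.choose, by
      rw [f.map_op]; exact congrArg (B.op i) (funext fun k => (β k).2.choose_spec)⟩⟩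

def rangeι (f : A ⟶ B) : range f ⟶ B :=
  ⟨Subtype.val, fun _ _ => rfl⟩

def rangeFactor (f : A ⟶ B) : A ⟶ range f :=
  ⟨fun a => ⟨f.toFun a, a, rfl⟩, fun i α => Subtype.ext (f.map_op i α)⟩

lemma surjective_of_extremalEpi (e : A ⟶ B) [ExtremalEpi e] : Function.Surjective e.toFun := by
  have : Mono (rangeι e) := mono_of_injective _ Subtype.val_injective
  have := ExtremalEpi.isIso e (rangeFactor e) (rangeι e) rfl
  intro b
  obtain ⟨⟨_, a, ha⟩, rfl⟩ := (bijective_of_isIso (rangeι e)).2 b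
  exact ⟨a, ha⟩

lemma extremalEpi_of_surjective (e : A ⟶ B) (he : Function.Surjective e.toFun) :
    ExtremalEpi e where
  toEpi := epi_of_surjective e he
  isIso p i fac := by
    refine isIso_of_bijective i ⟨injective_of_mono i, fun b => ?_⟩
    obtain ⟨a, rfl⟩ := he b
    exact ⟨p.toFun a, by rw [← fac]; rfl⟩

end Alg

namespace CategoryTheory

variable {C : Type*} [Category C] {D : Type*} [Category D]

def IsExtremalProjective (P : C) : Prop :=
  ∀ ⦃A B : C⦄ (e : A ⟶ B) [ExtremalEpi e] (f : P ⟶ B), ∃ g : P ⟶ A, g ≫ e = f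

structure IsMinimalProjectiveSeparator (P : C) : Prop where
  isExtremalProjective : IsExtremalProjective P
  isSeparator : IsSeparator P
  isIso_of_retract : ∀ ⦃Q : C⦄ (h : Retract Q P), IsSeparator Q → IsIso h.r

namespace Equivalence

variable (E : C ≌ D)

instance extremalEpi_inverse_map {A B : D} (e : A ⟶ B) [ExtremalEpi e] :
    ExtremalEpi (E.inverse.map e) where
  isIso p i fac _ := by
    have : IsIso (E.functor.map i ≫ E.counit.app B) :=
      ExtremalEpi.isIso e (E.counitInv.app A ≫ E.functor.map p) _ (by
        simp [← E.functor.map_comp_assoc, fac])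
    have : IsIso (E.functor.map i) := IsIso.of_isIso_comp_right _ (E.counit.app B)
    exact isIso_of_fully_faithful E.functor i

lemma isExtremalProjective_functor_obj {P : C} (hP : IsExtremalProjective P) :
    IsExtremalProjective (E.functor.obj P) := by
  intro A B e _ f
  let adj := E.toAdjunction
  obtain ⟨g, hg⟩ := hP (E.inverse.map e) (adj.homEquiv _ _ f)
  refine ⟨(adj.homEquiv _ _).symm g, ?_⟩
  rw [← adj.homEquiv_naturality_right_symm, hg, Equiv.symm_apply_apply]

lemma isMinimalProjectiveSeparator_functor_obj {P : C} (hP : IsMinimalProjectiveSeparator P) :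
    IsMinimalProjectiveSeparator (E.functor.obj P) where
  isExtremalProjective := E.isExtremalProjective_functor_obj hP.isExtremalProjective
  isSeparator := hP.isSeparator.of_equivalence E
  isIso_of_retract Q h hQ := by
    have : IsIso (E.unit.app P ≫ E.inverse.map h.r) :=
      hP.isIso_of_retract ((h.map E.inverse).trans (Retract.ofIso (E.unitIso.app P).symm))
        (hQ.of_equivalence E.symm)
    have : IsIso (E.inverse.map h.r) := IsIso.of_isIso_comp_left (E.unit.app P) _
    exact isIso_of_fully_faithful E.inverse h.r

end Equivalence

end CategoryTheory

namespace Alg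

open AlgTerm

variable {I : Type u} {K : I → Type u}

lemma isSeparator_freeAlg₁ : IsSeparator (freeAlg₁ K) :=
  (isSeparator_def _).mpr fun _ _ _ _ hfg => HomOfAlg.ext <| funext fun a =>
    congrArg (fun h => HomOfAlg.toFun h freeAlg₁.gen) (hfg (freeAlg₁.homOf _ a))

lemma isExtremalProjective_freeAlg₁ : IsExtremalProjective (freeAlg₁ K) := by
  intro A B e _ f
  obtain ⟨a, ha⟩ := surjective_of_extremalEpi e (f.toFun freeAlg₁.gen)
  exact ⟨freeAlg₁.homOf _ a, freeAlg₁.hom_ext ha⟩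

lemma exists_hom_ne_of_isSeparator {Q : Alg K} (hQ : IsSeparator Q) :
    ∃ (A : Alg K) (h₁ h₂ : Q ⟶ A), h₁ ≠ h₂ := by
  let B : Alg K := ⟨ULift Bool, fun _ _ => ⟨true⟩⟩
  let g : B ⟶ B := ⟨fun _ => ⟨true⟩, fun _ _ => rfl⟩
  have hg : 𝟙 B ≠ g := fun h => Bool.false_ne_true <|
    congrArg ULift.down (congrFun (congrArg HomOfAlg.toFun h) ⟨false⟩)
  by_contra! H
  exact hg ((isSeparator_def Q).mp hQ _ _ fun h => H B _ _)

/-- A separating retract of a term algebra contains a variable: otherwise every element of the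
retract is a closed term, so all homomorphisms out of the retract coincide. -/
lemma exists_var_fixed_of_retract {X : Type u} {Q : Alg K} (h : Retract Q (TermAlg K X))
    (hQ : IsSeparator Q) : ∃ y, h.i.toFun (h.r.toFun (var y)) = var y := by
  by_contra! hσ
  have hfix (q : Q.carrier) :
      (h.i.toFun q).subst (fun y => h.i.toFun (h.r.toFun (var y))) = h.i.toFun q := by
    refine (TermAlg.toFun_eq_extendHom (h.r ≫ h.i) _).symm.trans ?_
    exact congrArg h.i.toFun (congrFun (congrArg HomOfAlg.toFun h.retract) q)
  obtain ⟨A, h₁, h₂, hne⟩ := exists_hom_ne_of_isSeparator hQ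
  refine hne (HomOfAlg.ext <| funext fun q => ?_)
  have hq (f : Q ⟶ A) : f.toFun q = (h.r ≫ f).toFun (h.i.toFun q) :=
    (congrArg (fun g => HomOfAlg.toFun g q) (h.retract_assoc f)).symm
  rw [hq h₁, hq h₂]
  exact (TermAlg.toFun_eq_extendHom _ _).trans <|
    (extendHom_eq_of_subst_eq_self hσ (hfix q) _ _).trans (TermAlg.toFun_eq_extendHom _ _).symm

lemma isMinimalProjectiveSeparator_freeAlg₁ : IsMinimalProjectiveSeparator (freeAlg₁ K) where
  isExtremalProjective := isExtremalProjective_freeAlg₁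
  isSeparator := isSeparator_freeAlg₁
  isIso_of_retract Q h hQ := by
    obtain ⟨⟨⟩, hy⟩ := exists_var_fixed_of_retract h hQ
    exact ⟨h.i, freeAlg₁.hom_ext hy, h.retract⟩

lemma nonempty_iso_freeAlg₁ {P : Alg K} (hP : IsMinimalProjectiveSeparator P) :
    Nonempty (P ≅ freeAlg₁ K) := by
  let e : TermAlg K P.carrier ⟶ P := TermAlg.lift id
  have : ExtremalEpi e := extremalEpi_of_surjective e fun p => ⟨var p, rfl⟩
  obtain ⟨ι, hι⟩ := hP.isExtremalProjective e (𝟙 P)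
  obtain ⟨y, hy⟩ := exists_var_fixed_of_retract ⟨ι, e, hι⟩ hP.isSeparator
  let r : P ⟶ freeAlg₁ K := ι ≫ TermAlg.lift fun _ => freeAlg₁.gen
  have hr : freeAlg₁.homOf P y ≫ r = 𝟙 _ := freeAlg₁.hom_ext <| by
    change extendHom _ (ι.toFun y) = _
    rw [show ι.toFun y = var y from hy]
    rfl
  have := hP.isIso_of_retract ⟨_, r, hr⟩ isSeparator_freeAlg₁
  exact ⟨asIso r⟩

end Alg

namespace TermAlg

variable {I : Type u} {K : I → Type u} {X Y : Type u}

def homOfTerm (t : AlgTerm K X) : freeAlg₁ K ⟶ TermAlg K X :=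
  lift fun _ => t

lemma homOfTerm_injective : Function.Injective (homOfTerm : AlgTerm K X → _) :=
  fun _ _ h => congrArg (fun f => HomOfAlg.toFun f freeAlg₁.gen) h

def substHom (σ : X → AlgTerm K Y) : TermAlg K X ⟶ TermAlg K Y :=
  lift σ

lemma homOfTerm_comp_substHom (t : AlgTerm K X) (σ : X → AlgTerm K Y) :
    homOfTerm t ≫ substHom σ = homOfTerm (t.subst σ) :=
  freeAlg₁.hom_ext rfl

variable (K X) in
def isColimitCofan :
    IsColimit (Cofan.mk (TermAlg K X) fun x => homOfTerm (.var x) :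
      Cofan fun _ : X => freeAlg₁ K) :=
  Cofan.IsColimit.mk _ (fun s => lift fun x => (s.inj x).toFun freeAlg₁.gen)
    (fun _ _ => freeAlg₁.hom_ext rfl)
    (fun _ _ hm => hom_ext fun x => congrArg (fun h => HomOfAlg.toFun h freeAlg₁.gen) (hm x))

end TermAlg

structure CloneIso {I J : Type u} (K : I → Type u) (L : J → Type u) where
  equiv : ∀ V : Type u, AlgTerm K V ≃ AlgTerm L V
  map_var : ∀ {V : Type u} (v : V), equiv V (.var v) = .var v
  map_subst : ∀ {V W : Type u} (σ : V → AlgTerm K W) (t : AlgTerm K V),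
    equiv W (t.subst σ) = (equiv V t).subst (equiv W ∘ σ)

namespace CloneIso

open AlgTerm TermAlg

section OfEquivalence

variable {I J : Type u} {K : I → Type u} {L : J → Type u} (E : Alg K ≌ Alg L)
  (θ : E.functor.obj (freeAlg₁ K) ≅ freeAlg₁ L)

noncomputable def isColimitMapCofan (V : Type u) :
    IsColimit (Cofan.mk (E.functor.obj (TermAlg K V)) fun v => E.functor.map (homOfTerm (var v)) :
      Cofan fun _ : V => E.functor.obj (freeAlg₁ K)) :=
  isColimitCofanMkObjOfIsColimit E.functor _ _ (TermAlg.isColimitCofan K V)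

lemma map_homOfTerm_var_desc {V : Type u} {A : Alg L}
    (f : V → (E.functor.obj (freeAlg₁ K) ⟶ A)) (v : V) :
    E.functor.map (homOfTerm (var v)) ≫ Cofan.IsColimit.desc (isColimitMapCofan E V) f = f v :=
  Cofan.IsColimit.fac (isColimitMapCofan E V) f v

lemma homOfTerm_var_desc {V : Type u} {A : Alg L} (f : V → (freeAlg₁ L ⟶ A)) (v : V) :
    homOfTerm (var v) ≫ Cofan.IsColimit.desc (TermAlg.isColimitCofan L V) f = f v :=
  Cofan.IsColimit.fac (TermAlg.isColimitCofan L V) f v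

/-- `E (TermAlg K V)` and `TermAlg L V` are both `V`-fold coproducts of copies of
`E (freeAlg₁ K) ≅ freeAlg₁ L`. -/
noncomputable def termAlgIso (V : Type u) : E.functor.obj (TermAlg K V) ≅ TermAlg L V where
  hom := Cofan.IsColimit.desc (isColimitMapCofan E V) fun v => θ.hom ≫ homOfTerm (var v)
  inv := Cofan.IsColimit.desc (TermAlg.isColimitCofan L V) fun v =>
    θ.inv ≫ E.functor.map (homOfTerm (var v))
  hom_inv_id := Cofan.IsColimit.hom_ext (isColimitMapCofan E V) _ _ fun v => by
    change E.functor.map (homOfTerm (var v)) ≫ _ = E.functor.map (homOfTerm (var v)) ≫ _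
    rw [reassoc_of% map_homOfTerm_var_desc, Category.assoc, homOfTerm_var_desc,
      Iso.hom_inv_id_assoc, Category.comp_id]
  inv_hom_id := Cofan.IsColimit.hom_ext (TermAlg.isColimitCofan L V) _ _ fun v => by
    change homOfTerm (var v) ≫ _ = homOfTerm (var v) ≫ _
    rw [reassoc_of% homOfTerm_var_desc, Category.assoc, map_homOfTerm_var_desc,
      Iso.inv_hom_id_assoc, Category.comp_id]

lemma map_homOfTerm_var_termAlgIso_hom {V : Type u} (v : V) :
    E.functor.map (homOfTerm (var v)) ≫ (termAlgIso E θ V).hom = θ.hom ≫ homOfTerm (var v) :=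
  map_homOfTerm_var_desc E _ v

noncomputable def termEquiv (V : Type u) : AlgTerm K V ≃ AlgTerm L V :=
  (freeAlg₁.homEquiv (TermAlg K V)).symm.trans <| E.fullyFaithfulFunctor.homEquiv.trans <|
    (θ.homCongr (termAlgIso E θ V)).trans (freeAlg₁.homEquiv (TermAlg L V))

lemma homOfTerm_termEquiv {V : Type u} (t : AlgTerm K V) :
    homOfTerm (termEquiv E θ V t) =
      θ.inv ≫ E.functor.map (homOfTerm t) ≫ (termAlgIso E θ V).hom :=
  (freeAlg₁.homEquiv (TermAlg L V)).symm_apply_apply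
    (θ.inv ≫ E.functor.map (homOfTerm t) ≫ (termAlgIso E θ V).hom)

lemma termEquiv_var {V : Type u} (v : V) : termEquiv E θ V (var v) = var v :=
  homOfTerm_injective <| by
    rw [homOfTerm_termEquiv, map_homOfTerm_var_termAlgIso_hom, Iso.inv_hom_id_assoc]

lemma map_substHom_termAlgIso_hom {V W : Type u} (σ : V → AlgTerm K W) :
    E.functor.map (substHom σ) ≫ (termAlgIso E θ W).hom =
      (termAlgIso E θ V).hom ≫ substHom (termEquiv E θ W ∘ σ) := by
  refine Cofan.IsColimit.hom_ext (isColimitMapCofan E V) _ _ fun v => ?_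
  change E.functor.map (homOfTerm (var v)) ≫ _ = E.functor.map (homOfTerm (var v)) ≫ _
  rw [← E.functor.map_comp_assoc, homOfTerm_comp_substHom,
    reassoc_of% map_homOfTerm_var_termAlgIso_hom,
    homOfTerm_comp_substHom, subst_var, subst_var, Function.comp_apply, homOfTerm_termEquiv,
    Iso.hom_inv_id_assoc]

lemma termEquiv_subst {V W : Type u} (σ : V → AlgTerm K W) (t : AlgTerm K V) :
    termEquiv E θ W (t.subst σ) = (termEquiv E θ V t).subst (termEquiv E θ W ∘ σ) :=
  homOfTerm_injective <| by
    rw [homOfTerm_termEquiv, ← homOfTerm_comp_substHom, E.functor.map_comp, Category.assoc,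
      map_substHom_termAlgIso_hom, ← homOfTerm_comp_substHom, homOfTerm_termEquiv]
    simp only [Category.assoc]

noncomputable def ofEquivalence : CloneIso K L where
  equiv := termEquiv E θ
  map_var := termEquiv_var E θ
  map_subst := termEquiv_subst E θ

end OfEquivalence

end CloneIso

namespace AlgTerm

variable {I : Type u} {K : I → Type u} {X Y : Type u}

def IsVar (t : AlgTerm K X) : Prop := ∃ x, t = var x

def IsOpOfVars (t : AlgTerm K X) : Prop :=
  ∃ (i : I) (α : K i → X), t = op i fun k => var (α k)

def getVar? : AlgTerm K X → Option X
  | var x => some x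
  | op _ _ => none

lemma exists_eq_var_of_subst_eq_var {u : AlgTerm K X} {σ : X → AlgTerm K Y} {y : Y}
    (h : u.subst σ = var y) : ∃ x, u = var x ∧ σ x = var y := by
  cases u with
  | var x => exact ⟨x, rfl, h⟩
  | op i β => cases h

/-- A description of `IsOpOfVars` by substitution alone, hence invariant under clone
isomorphisms. The fresh variable `none` absorbs the variables of `u` that `t` does not use. -/
lemma isOpOfVars_iff {t : AlgTerm K X} :
    IsOpOfVars t ↔ ¬ IsVar t ∧ ∀ (W : Type u) (u : AlgTerm K W) (σ : W → AlgTerm K X),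
      ¬ IsVar u → u.subst σ = t →
        ∃ τ : W → Option X, u.subst (var ∘ τ) = t.subst (var ∘ some) := by
  constructor
  · rintro ⟨i, α, rfl⟩
    refine ⟨(by rintro ⟨_, h⟩; cases h), fun W u σ hu h => ?_⟩
    cases u with
    | var w => exact absurd ⟨w, rfl⟩ hu
    | op j γ =>
      obtain ⟨rfl, hγ⟩ := op.inj h
      refine ⟨fun w => (σ w).getVar?, congrArg (op j) (funext fun k => ?_)⟩
      obtain ⟨w, hw, hσw⟩ := exists_eq_var_of_subst_eq_var (congrFun (eq_of_heq hγ) k)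
      change (γ k).subst (var ∘ fun w => (σ w).getVar?) = var (some (α k))
      rw [hw, subst_var, Function.comp_apply, hσw]
      rfl
  · rintro ⟨hnv, h⟩
    cases t with
    | var x => exact absurd ⟨x, rfl⟩ hnv
    | op i β =>
      obtain ⟨τ, hτ⟩ := h (K i) (op i var) β (by rintro ⟨_, h⟩; cases h) rfl
      have hβ (k : K i) : ∃ x, β k = var x := by
        obtain ⟨x, hx, -⟩ :=
          exists_eq_var_of_subst_eq_var (congrFun (eq_of_op_eq_op hτ) k).symm
        exact ⟨x, hx⟩
      choose α hα using hβ
      exact ⟨i, α, congrArg (op i) (funext hα)⟩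

end AlgTerm

namespace CloneIso

open AlgTerm

variable {I J : Type u} {K : I → Type u} {L : J → Type u} (c : CloneIso K L)

def symm : CloneIso L K where
  equiv V := (c.equiv V).symm
  map_var v := (c.equiv _).symm_apply_eq.mpr (c.map_var v).symm
  map_subst σ t := (c.equiv _).symm_apply_eq.mpr <| by
    rw [c.map_subst, Equiv.apply_symm_apply]
    exact congrArg (t.subst ·) (funext fun v => ((c.equiv _).apply_symm_apply (σ v)).symm)

lemma map_rename {V W : Type u} (ρ : V → W) (t : AlgTerm K V) :
    c.equiv W (t.subst (var ∘ ρ)) = (c.equiv V t).subst (var ∘ ρ) := by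
  rw [c.map_subst]
  exact congrArg (subst · _) (funext fun v => c.map_var (ρ v))

lemma isOpOfVars_equiv {V : Type u} {t : AlgTerm K V} (ht : IsOpOfVars t) :
    IsOpOfVars (c.equiv V t) := by
  rw [isOpOfVars_iff] at ht ⊢
  obtain ⟨hnv, h⟩ := ht
  refine ⟨fun ⟨x, hx⟩ => hnv ⟨x, (c.equiv V).injective (hx.trans (c.map_var x).symm)⟩,
    fun W u σ hu hus => ?_⟩
  have hu' : ¬ IsVar (c.symm.equiv W u) := fun ⟨w, hw⟩ =>
    hu ⟨w, (c.symm.equiv W).injective (hw.trans (c.symm.map_var w).symm)⟩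
  have hus' : (c.symm.equiv W u).subst (c.symm.equiv V ∘ σ) = t := by
    rw [← c.symm.map_subst, hus]
    exact (c.equiv V).symm_apply_apply t
  obtain ⟨τ, hτ⟩ := h W _ _ hu' hus'
  refine ⟨τ, ?_⟩
  have := congrArg (c.equiv (Option V)) hτ
  rwa [c.map_rename, c.map_rename, show c.equiv W (c.symm.equiv W u) = u from
    (c.equiv W).apply_symm_apply u] at this

lemma eq_and_surjective_of_equiv_op {i i' : I} {j : J} {α : L j → K i} {γ : K i' → L j}
    (hα : c.equiv _ (op i var) = op j fun l => var (α l))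
    (hγ : c.symm.equiv _ (op j var) = op i' fun k => var (γ k)) :
    i' = i ∧ Function.Surjective α := by
  have key : (op i var : AlgTerm K (K i)) = op i' fun k => var (α (γ k)) :=
    calc op i var = c.symm.equiv _ (c.equiv _ (op i var)) :=
          ((c.equiv _).symm_apply_apply _).symm
      _ = c.symm.equiv _ ((op j var).subst (var ∘ α)) := by rw [hα]; rfl
      _ = op i' fun k => var (α (γ k)) := by rw [c.symm.map_rename, hγ]; rfl
  obtain ⟨rfl, h⟩ := op.inj key
  exact ⟨rfl, fun k => ⟨γ k, (var.inj (congrFun (eq_of_heq h) k)).symm⟩⟩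

theorem _root_.EquivType.of_cloneIso (c : CloneIso K L) : EquivType K L := by
  have hop {ι : Type u} {κ : ι → Type u} (i : ι) : IsOpOfVars (op i var : AlgTerm κ (κ i)) :=
    ⟨i, id, rfl⟩
  choose φ α hα using fun i => c.isOpOfVars_equiv (hop i)
  choose ψ γ hγ using fun j => c.symm.isOpOfVars_equiv (hop j)
  have hψφ i := c.eq_and_surjective_of_equiv_op (hα i) (hγ (φ i))
  have hφψ j := c.symm.eq_and_surjective_of_equiv_op (hγ j) (hα (ψ j))
  refine ⟨⟨φ, ψ, fun i => (hψφ i).1, fun j => (hφψ j).1⟩, fun i => Cardinal.eq.mp ?_⟩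
  refine le_antisymm (Cardinal.mk_le_of_surjective (hψφ i).2) ?_
  have := Cardinal.mk_le_of_surjective (hφψ (φ i)).2
  rwa [(hψφ i).1] at this

end CloneIso

/-- isomorphic categories of algebras come from equivalent types. -/
theorem iso_categories_implies_equivType {I J : Type u} (K : I → Type u) (L : J → Type u)
    (h : ∃ (T : Functor (Alg K) (Alg L)) (S : Functor (Alg L) (Alg K)),
      T.comp S = Functor.id (Alg K) ∧ S.comp T = Functor.id (Alg L)) :
    EquivType K L := by
  obtain ⟨T, S, hTS, hST⟩ := h
  let E : Alg K ≌ Alg L := CategoryTheory.Equivalence.mk T S (eqToIso hTS.symm) (eqToIso hST)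
  obtain ⟨θ⟩ := Alg.nonempty_iso_freeAlg₁
    (E.isMinimalProjectiveSeparator_functor_obj Alg.isMinimalProjectiveSeparator_freeAlg₁)
  exact .of_cloneIso (CloneIso.ofEquivalence E θ)
end

section
/- If the concrete categories (A(Δ), s) and (A(Δ'), s) are concretely isomorphic, i.e., isomorphic via a functor commuting with the underlying set functors, then Δ and Δ' are equivalent types. -/
universe u

open CategoryTheory

/-!
A concrete functor `T : A(K) ⥤ A(L)` puts on the carrier of every `K`-algebra `L`-operations
that commute with all homomorphisms. Such natural operations are term operations, so each
symbol `j` of `L` is realised by a `K`-term `t j` in the variables `L j`; likewise `S` gives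
`L`-terms `s i`. Since `T ⋙ S` is the identity, substituting the `t j` into `s i` returns the
basic term `op i var`, and symmetrically. Hence no `t j` or `s i` is a variable, and comparing
head symbols yields mutually inverse maps `b : I → J`, `a : J → I`. Substituting non-variable
terms creates no new variables in argument position, so every variable of `K i`, being an
argument of `op i var`, is already an argument of the head of `s i`: `#(K i) ≤ #(L (b i))`,
and symmetrically `#(L j) ≤ #(K (a j))`.
-/

variable {I J : Type u} {K : I → Type u} {L : J → Type u}

namespace AlgTerm

variable {X : Type u}

def liftHom {A : Alg K} (α : X → A.carrier) : HomOfAlg K (TermAlg K X) A :=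
  ⟨extendHom α, fun _ _ => rfl⟩

theorem extendHom_var (u : AlgTerm K X) : extendHom (A := TermAlg K X) var u = u := by
  induction u with
  | var x => rfl
  | op i β ih => exact congrArg (op i) (funext ih)

theorem extendHom_eq_var {Y : Type u} {σ : Y → AlgTerm K X} {u : AlgTerm K Y} {x : X}
    (h : extendHom (A := TermAlg K X) σ u = var x) : ∃ y, u = var y ∧ σ y = var x := by
  cases u with
  | var y => exact ⟨y, rfl, h⟩
  | op i β => cases h

def expand (t : ∀ j, AlgTerm K (L j)) : AlgTerm L X → AlgTerm K X
  | var x => var x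
  | op j β => extendHom (A := TermAlg K X) (fun l => expand t (β l)) (t j)

def argVars : AlgTerm K X → Set X
  | var _ => ∅
  | op _ β => {x | ∃ k, β k = var x}

section

variable {t : ∀ j, AlgTerm K (L j)}

theorem expand_op_of_eq {j : J} {i : I} {γ : K i → AlgTerm K (L j)} (htj : t j = op i γ)
    (β : L j → AlgTerm L X) :
    expand t (op j β)
      = op i fun k => extendHom (A := TermAlg K X) (fun l => expand t (β l)) (γ k) := by
  rw [expand, htj]; rfl

theorem exists_op_of_op_var_eq_expand {i : I} {u : AlgTerm L (K i)}
    (h : op i var = expand t u) : ∃ j β, u = op j β := by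
  cases u with
  | var x => cases h
  | op j β => exact ⟨j, β, rfl⟩

theorem eq_of_op_var_eq_expand {i i' : I} {j : J} {γ : K i' → AlgTerm K (L j)}
    {β : L j → AlgTerm L (K i)} (htj : t j = op i' γ) (h : op i var = expand t (op j β)) :
    i = i' := by
  rw [expand_op_of_eq htj] at h
  exact (op.inj h).1

theorem eq_var_of_expand_eq_var (ht : ∀ j y, t j ≠ var y) {u : AlgTerm L X} {x : X}
    (h : expand t u = var x) : u = var x := by
  cases u with
  | var y =>
    simp only [expand, var.injEq] at h
    rw [h]
  | op j β =>
    obtain ⟨y, hy, -⟩ := extendHom_eq_var h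
    exact absurd hy (ht j y)

theorem argVars_expand_subset (ht : ∀ j y, t j ≠ var y) (u : AlgTerm L X) :
    argVars (expand t u) ⊆ argVars u := by
  cases u with
  | var y => exact fun _ hx => hx
  | op j β =>
    obtain ⟨i, γ, htj⟩ : ∃ i γ, t j = op i γ := by
      cases htj : t j with
      | var y => exact absurd htj (ht j y)
      | op i γ => exact ⟨i, γ, rfl⟩
    intro x hx
    rw [expand_op_of_eq htj β] at hx
    obtain ⟨k, hk⟩ := hx
    obtain ⟨l, -, hl⟩ := extendHom_eq_var hk
    exact ⟨l, eq_var_of_expand_eq_var ht hl⟩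

theorem mk_le_of_univ_subset_argVars {j : J} {β : L j → AlgTerm L X}
    (h : Set.univ ⊆ argVars (op j β)) : Cardinal.mk X ≤ Cardinal.mk (L j) := by
  choose l hl using fun x => h (Set.mem_univ x)
  refine Cardinal.mk_le_of_injective (f := l) fun x y hxy => ?_
  exact var.inj (by rw [← hl x, ← hl y, hxy])

theorem mk_le_of_op_var_eq_expand (ht : ∀ j y, t j ≠ var y) {i : I} {j : J}
    {β : L j → AlgTerm L (K i)} (h : op i var = expand t (op j β)) :
    Cardinal.mk (K i) ≤ Cardinal.mk (L j) := by
  refine mk_le_of_univ_subset_argVars (subset_trans ?_ (argVars_expand_subset ht (op j β)))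
  rw [← h]
  exact fun x _ => ⟨x, rfl⟩

end

theorem equivType_of_expand_inverse (t : ∀ j, AlgTerm K (L j)) (s : ∀ i, AlgTerm L (K i))
    (hts : ∀ i, op i var = expand t (s i)) (hst : ∀ j, op j var = expand s (t j)) :
    EquivType K L := by
  choose b δ hδ using fun i => exists_op_of_op_var_eq_expand (hts i)
  choose a γ hγ using fun j => exists_op_of_op_var_eq_expand (hst j)
  have hts' : ∀ i, op i var = expand t (op (b i) (δ i)) := fun i => hδ i ▸ hts i
  have hst' : ∀ j, op j var = expand s (op (a j) (γ j)) := fun j => hγ j ▸ hst j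
  have ht : ∀ j y, t j ≠ var y := fun j y h => by cases (hγ j).symm.trans h
  have hs : ∀ i x, s i ≠ var x := fun i x h => by cases (hδ i).symm.trans h
  have hab : ∀ i, a (b i) = i := fun i => (eq_of_op_var_eq_expand (hγ (b i)) (hts' i)).symm
  have hba : ∀ j, b (a j) = j := fun j => (eq_of_op_var_eq_expand (hδ (a j)) (hst' j)).symm
  refine ⟨⟨b, a, hab, hba⟩, fun i => Cardinal.eq.mp (le_antisymm ?_ ?_)⟩
  · exact mk_le_of_op_var_eq_expand ht (hts' i)
  · have hle := mk_le_of_op_var_eq_expand hs (hst' (b i))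
    rwa [hab] at hle

end AlgTerm

def IsNaturalOp {X : Type u} (o : ∀ A : Alg K, (X → A.carrier) → A.carrier) : Prop :=
  ∀ {A B : Alg K} (f : HomOfAlg K A B) (α : X → A.carrier),
    f.toFun (o A α) = o B (f.toFun ∘ α)

theorem IsNaturalOp.eq_extendHom {X : Type u} {o : ∀ A : Alg K, (X → A.carrier) → A.carrier}
    (ho : IsNaturalOp o) (A : Alg K) (α : X → A.carrier) :
    o A α = extendHom α (o (TermAlg K X) AlgTerm.var) :=
  (ho (AlgTerm.liftHom α) AlgTerm.var).symm

theorem Alg.op_eq_of_eq {A C : Alg K} (h : C = A) (i : I) (α : K i → A.carrier) :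
    A.op i α = Equiv.cast (congrArg Alg.carrier h)
      (C.op i ((Equiv.cast (congrArg Alg.carrier h)).symm ∘ α)) := by
  subst h; rfl

namespace CategoryTheory.Functor

variable (T : Alg K ⥤ Alg L) (hT : T ⋙ forgetAlg L = forgetAlg K)

def carrierEquiv (A : Alg K) : (T.obj A).carrier ≃ A.carrier :=
  Equiv.cast (congrArg (fun F : Alg K ⥤ Type u => F.obj A) hT)

theorem map_toFun {A B : Alg K} (f : A ⟶ B) (x : (T.obj A).carrier) :
    (T.map f).toFun x = (T.carrierEquiv hT B).symm (f.toFun (T.carrierEquiv hT A x)) := by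
  have key : ∀ {X Y Z W : Type u} (p : X = Y) (g : Y ⟶ Z) (q : Z = W) (y : X),
      (eqToHom p ≫ g ≫ eqToHom q) y = cast q (g (cast p y)) := by
    intro X Y Z W p g q y; subst p q; rfl
  exact (types_congr_hom (Functor.congr_hom hT f) x).trans (key _ _ _ x)

def inducedOp (j : J) (A : Alg K) (α : L j → A.carrier) : A.carrier :=
  T.carrierEquiv hT A ((T.obj A).op j ((T.carrierEquiv hT A).symm ∘ α))

theorem isNaturalOp_inducedOp (j : J) : IsNaturalOp (T.inducedOp hT j) := by
  intro A B f α
  have hop := (T.map (f : A ⟶ B)).map_op j ((T.carrierEquiv hT A).symm ∘ α)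
  simp only [Function.comp_def, map_toFun T hT, Equiv.apply_symm_apply] at hop
  simp only [inducedOp, Function.comp_def, ← hop, Equiv.apply_symm_apply]

def inducedTerm (j : J) : AlgTerm K (L j) :=
  T.inducedOp hT j (TermAlg K (L j)) AlgTerm.var

theorem inducedOp_eq_extendHom (j : J) (A : Alg K) (α : L j → A.carrier) :
    T.inducedOp hT j A α = extendHom α (T.inducedTerm hT j) :=
  IsNaturalOp.eq_extendHom (T.isNaturalOp_inducedOp hT j) A α

theorem carrierEquiv_extendHom {X : Type u} (A : Alg K) (α : X → (T.obj A).carrier)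
    (u : AlgTerm L X) :
    T.carrierEquiv hT A (extendHom α u)
      = extendHom (T.carrierEquiv hT A ∘ α) (u.expand (T.inducedTerm hT)) := by
  induction u with
  | var x => rfl
  | op j β ih =>
    calc T.carrierEquiv hT A (extendHom α (.op j β))
        = T.inducedOp hT j A fun l => T.carrierEquiv hT A (extendHom α (β l)) := by
          simp only [inducedOp, Function.comp_def, Equiv.symm_apply_apply]; rfl
      _ = T.inducedOp hT j A ((AlgTerm.liftHom (T.carrierEquiv hT A ∘ α)).toFun ∘
            fun l => ((β l).expand (T.inducedTerm hT) : (TermAlg K X).carrier)) := by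
          simp only [ih]; rfl
      _ = (AlgTerm.liftHom (T.carrierEquiv hT A ∘ α)).toFun
            (T.inducedOp hT j (TermAlg K X)
              fun l => ((β l).expand (T.inducedTerm hT) : (TermAlg K X).carrier)) :=
          (T.isNaturalOp_inducedOp hT j _ _).symm
      _ = _ := congrArg _ (T.inducedOp_eq_extendHom hT j _ _)

theorem op_eq_extendHom_expand (S : Alg L ⥤ Alg K) (hS : S ⋙ forgetAlg K = forgetAlg L)
    (hTS : T ⋙ S = 𝟭 (Alg K)) (A : Alg K) (i : I) (α : K i → A.carrier) :
    A.op i α = extendHom α ((S.inducedTerm hS i).expand (T.inducedTerm hT)) := by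
  have hA : S.obj (T.obj A) = A := Functor.congr_obj hTS A
  have he : Equiv.cast (congrArg Alg.carrier hA)
      = (S.carrierEquiv hS (T.obj A)).trans (T.carrierEquiv hT A) :=
    Equiv.ext fun x => (cast_cast _ _ x).symm
  calc A.op i α
      = T.carrierEquiv hT A (S.inducedOp hS i (T.obj A) ((T.carrierEquiv hT A).symm ∘ α)) := by
        rw [Alg.op_eq_of_eq hA, he]; rfl
    _ = T.carrierEquiv hT A
          (extendHom ((T.carrierEquiv hT A).symm ∘ α) (S.inducedTerm hS i)) := by
        rw [inducedOp_eq_extendHom]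
    _ = _ := by
        rw [carrierEquiv_extendHom, ← Function.comp_assoc, Equiv.self_comp_symm, Function.id_comp]

theorem op_var_eq_expand (S : Alg L ⥤ Alg K) (hS : S ⋙ forgetAlg K = forgetAlg L)
    (hTS : T ⋙ S = 𝟭 (Alg K)) (i : I) :
    AlgTerm.op i AlgTerm.var = (S.inducedTerm hS i).expand (T.inducedTerm hT) :=
  (T.op_eq_extendHom_expand hT S hS hTS (TermAlg K (K i)) i AlgTerm.var).trans
    (AlgTerm.extendHom_var _)

end CategoryTheory.Functor

/-- concretely isomorphic categories of algebras come from equivalent types. -/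
theorem concrete_iso_implies_equivType {I J : Type u} (K : I → Type u) (L : J → Type u)
    (h : ∃ (T : Functor (Alg K) (Alg L)) (S : Functor (Alg L) (Alg K)),
      T.comp S = Functor.id (Alg K) ∧ S.comp T = Functor.id (Alg L) ∧
      T.comp (forgetAlg L) = forgetAlg K) :
    EquivType K L := by
  obtain ⟨T, S, hTS, hST, hT⟩ := h
  have hS : S ⋙ forgetAlg K = forgetAlg L := by
    rw [← hT, ← Functor.assoc, hST, Functor.id_comp]
  exact AlgTerm.equivType_of_expand_inverse _ _
    (T.op_var_eq_expand hT S hS hTS) (S.op_var_eq_expand hS T hT hST)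
end

section
/- Let F be the absolutely free algebra on a set X of type Δ = (K_i)_{i∈I} with |X| ≥ |K_i| for all i, let Y = F \ X, and let S be the least equivalence relation on Y containing the relation R where y₁ R y₂ iff some endomorphism of F maps y₁ to y₂. Then the equivalence classes of S are exactly the sets φ(i) = { f_i(α) : α ∈ F^{K_i} } for i ∈ I, and i ↦ φ(i) is a bijection from I to Y/S. -/
universe u

open CategoryTheory

/-- A term which is not a variable. -/
def IsNonVar {I : Type u} {K : I → Type u} {X : Type u} (t : AlgTerm K X) : Prop :=
  ∀ x : X, t ≠ AlgTerm.var x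

/-- The relation `y₁ R y₂` on non-variables: some endomorphism of `F` maps `y₁` to `y₂`. -/
def EndoRel {I : Type u} (K : I → Type u) (X : Type u) (t₁ t₂ : AlgTerm K X) : Prop :=
  IsNonVar t₁ ∧ IsNonVar t₂ ∧
    ∃ σ : HomOfAlg K (TermAlg K X) (TermAlg K X), σ.toFun t₁ = t₂

/-
Endomorphisms of a term algebra preserve the outermost operation symbol of a non-variable term,
so the equivalence generated by `R` cannot relate terms with different head symbols, and the
sets `φ(i)` are unions of classes. Conversely, since `K i` embeds into `X`, the term
`f_i(x_k)_{k ∈ K i}` built from distinct variables is mapped onto any `f_i(α)` by a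
substitution, so it links all elements of `φ(i)` into a single class.
-/

namespace AlgTerm

variable {I : Type u} {K : I → Type u} {X : Type u}

def head : AlgTerm K X → Option I
  | var _ => none
  | op i _ => some i

theorem head_eq_some_iff {t : AlgTerm K X} {i : I} : t.head = some i ↔ ∃ α, t = op i α := by
  cases t with
  | var x => simp [head]
  | op j α =>
    constructor
    · rintro ⟨⟩
      exact ⟨α, rfl⟩
    · rintro ⟨β, ⟨⟩⟩
      rfl

theorem isNonVar_op (i : I) (α : K i → AlgTerm K X) : IsNonVar (op i α) :=
  fun _ h => by cases h

theorem exists_head_eq_some_of_isNonVar {t : AlgTerm K X} (ht : IsNonVar t) :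
    ∃ i, t.head = some i := by
  cases t with
  | var x => exact absurd rfl (ht x)
  | op i _ => exact ⟨i, rfl⟩

theorem head_hom_apply (σ : HomOfAlg K (TermAlg K X) (TermAlg K X)) {t : AlgTerm K X}
    (ht : IsNonVar t) : (σ.toFun t).head = t.head := by
  cases t with
  | var x => exact absurd rfl (ht x)
  | op i α => exact (congrArg head (σ.map_op i α)).trans rfl

def substHom {A : Alg K} (g : X → A.carrier) : HomOfAlg K (TermAlg K X) A :=
  ⟨extendHom g, fun _ _ => rfl⟩

theorem exists_hom_op_var_eq {i : I} {e : K i → X} (he : Function.Injective e)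
    (γ : K i → AlgTerm K X) :
    ∃ σ : HomOfAlg K (TermAlg K X) (TermAlg K X), σ.toFun (op i (var ∘ e)) = op i γ :=
  ⟨substHom (A := TermAlg K X) (Function.extend e γ var),
    congrArg (op i) (funext fun k => he.extend_apply γ var k)⟩

theorem head_eq_of_eqvGen_endoRel {t₁ t₂ : AlgTerm K X}
    (h : Relation.EqvGen (EndoRel K X) t₁ t₂) : t₁.head = t₂.head := by
  refine (InvImage.equivalence _ _ eq_equivalence).eqvGen_iff.1
    (h.mono fun a b ⟨ha, _, σ, hσ⟩ => ?_)
  exact hσ ▸ (head_hom_apply σ ha).symm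

theorem eqvGen_endoRel_op {i : I} (e : K i ↪ X) (α β : K i → AlgTerm K X) :
    Relation.EqvGen (EndoRel K X) (op i α) (op i β) := by
  have link : ∀ γ, EndoRel K X (op i (var ∘ e)) (op i γ) := fun γ =>
    ⟨isNonVar_op _ _, isNonVar_op _ _, exists_hom_op_var_eq e.injective γ⟩
  exact ((Relation.EqvGen.rel _ _ (link α)).symm _ _).trans _ _ _ (.rel _ _ (link β))

end AlgTerm

/-- the equivalence classes of the equivalence relation generated by `R` on
`Y = F \ X` are exactly the sets `φ(i) = {f_i(α)}`, and `i ↦ φ(i)` is injective (hence a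
bijection onto the set of classes). -/
theorem eqvGen_classes_eq_operations {I : Type u} (K : I → Type u) (X : Type u)
    (hX : ∀ i, Nonempty (K i ↪ X)) :
    (∀ t₁ t₂ : AlgTerm K X, IsNonVar t₁ → IsNonVar t₂ →
      (Relation.EqvGen (EndoRel K X) t₁ t₂ ↔
        ∃ i, (∃ α, t₁ = AlgTerm.op i α) ∧ (∃ β, t₂ = AlgTerm.op i β))) ∧
    Function.Injective
      (fun i : I => {t : AlgTerm K X | ∃ α : K i → AlgTerm K X, t = AlgTerm.op i α}) := by
  refine ⟨fun t₁ t₂ h₁ _ => ⟨fun h => ?_, ?_⟩, fun i j h => ?_⟩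
  · obtain ⟨i, hi⟩ := AlgTerm.exists_head_eq_some_of_isNonVar h₁
    exact ⟨i, AlgTerm.head_eq_some_iff.1 hi,
      AlgTerm.head_eq_some_iff.1 (AlgTerm.head_eq_of_eqvGen_endoRel h ▸ hi)⟩
  · rintro ⟨i, ⟨α, rfl⟩, β, rfl⟩
    exact AlgTerm.eqvGen_endoRel_op (hX i).some α β
  · obtain ⟨β, hβ⟩ :=
      (Set.ext_iff.1 h (AlgTerm.op i (AlgTerm.var ∘ (hX i).some))).1 ⟨_, rfl⟩
    exact (AlgTerm.op.inj hβ).1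
end
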